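/- arXiv:2110.07290 — 5 statements merged into one kernel-verified Lean document; each statement's English description precedes it below -/
import Mathlib

section
/- Let B ⊆ ℝ^(n+1) be compact, strictly convex, with non-empty interior, let v be a unit vector, and let D_v^0 be the set of points of B projecting via p_v (orthogonal projection onto v^⊥) to the boundary of p_v(B). Then the restriction of p_v to D_v^0 is a homeomorphism onto ∂(p_v(B)). -/
open Metric Set
open scoped RealInnerProductSpace

/-- Orthogonal projection of `ℝ^{n+1}` onto the hyperplane orthogonal to `v`. -/
noncomputable def pv {n : ℕ} (v : EuclideanSpace ℝ (Fin (n + 1))) :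
    EuclideanSpace ℝ (Fin (n + 1)) →L[ℝ] ↥((ℝ ∙ v)ᗮ) :=
  Submodule.orthogonalProjectionOnto (ℝ ∙ v)ᗮ

/-- `B` is strictly convex: every open segment between two distinct points of `B`
lies in the interior of `B`. -/
def StrictlyConvexSet {V : Type*} [AddCommGroup V] [Module ℝ V] [TopologicalSpace V]
    (B : Set V) : Prop :=
  ∀ x ∈ B, ∀ y ∈ B, x ≠ y → openSegment ℝ x y ⊆ interior B

/-- Points of `B` projecting to the boundary of `p_v(B)`. -/
def D0 {n : ℕ} (B : Set (EuclideanSpace ℝ (Fin (n + 1)))) (v : EuclideanSpace ℝ (Fin (n + 1))) :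
    Set (EuclideanSpace ℝ (Fin (n + 1))) :=
  {x ∈ B | pv v x ∈ frontier (pv v '' B)}

/-- Upper region of `S = ∂B`: points over the interior of `p_v(B)` maximizing `x·v` on the fiber. -/
def Uplus {n : ℕ} (B : Set (EuclideanSpace ℝ (Fin (n + 1)))) (v : EuclideanSpace ℝ (Fin (n + 1))) :
    Set (EuclideanSpace ℝ (Fin (n + 1))) :=
  {x | x ∈ frontier B ∧ pv v x ∈ interior (pv v '' B) ∧
    ∀ y ∈ B, pv v y = pv v x → ⟪y, v⟫ ≤ ⟪x, v⟫}

/-- Lower region of `S = ∂B`: points over the interior of `p_v(B)` minimizing `x·v` on the fiber. -/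
def Uminus {n : ℕ} (B : Set (EuclideanSpace ℝ (Fin (n + 1)))) (v : EuclideanSpace ℝ (Fin (n + 1))) :
    Set (EuclideanSpace ℝ (Fin (n + 1))) :=
  {x | x ∈ frontier B ∧ pv v x ∈ interior (pv v '' B) ∧
    ∀ y ∈ B, pv v y = pv v x → ⟪x, v⟫ ≤ ⟪y, v⟫}

def Dplus {n : ℕ} (B : Set (EuclideanSpace ℝ (Fin (n + 1)))) (v : EuclideanSpace ℝ (Fin (n + 1))) :
    Set (EuclideanSpace ℝ (Fin (n + 1))) := D0 B v ∪ Uplus B v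

def Dminus {n : ℕ} (B : Set (EuclideanSpace ℝ (Fin (n + 1)))) (v : EuclideanSpace ℝ (Fin (n + 1))) :
    Set (EuclideanSpace ℝ (Fin (n + 1))) := D0 B v ∪ Uminus B v

/-- The median of `S` in direction `v`: midpoints of fiber pairs. -/
def median {n : ℕ} (B : Set (EuclideanSpace ℝ (Fin (n + 1)))) (v : EuclideanSpace ℝ (Fin (n + 1))) :
    Set (EuclideanSpace ℝ (Fin (n + 1))) :=
  {z | ∃ xp ∈ Dplus B v, ∃ xm ∈ Dminus B v, pv v xp = pv v xm ∧ z = midpoint ℝ xp xm}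

/-!
Two distinct points of a strictly convex set `B` with the same image under a linear open
map `f` have their midpoint in `interior B`, so that common image lies in
`f '' interior B ⊆ interior (f '' B)`. Hence `f` is injective on the points of `B` lying over
`frontier (f '' B)`; for compact `B` this set is compact and maps onto the frontier, so the
continuous bijection is a homeomorphism.
-/

theorem StrictlyConvexSet.injOn_preimage_frontier_image {E F : Type*}
    [AddCommGroup E] [Module ℝ E] [TopologicalSpace E]
    [AddCommGroup F] [Module ℝ F] [TopologicalSpace F] {B : Set E}
    (hB : StrictlyConvexSet B) {f : E →ₗ[ℝ] F} (hf : IsOpenMap f) :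
    InjOn f {x ∈ B | f x ∈ frontier (f '' B)} := by
  rintro x ⟨hxB, hxf⟩ y ⟨hyB, -⟩ hxy
  by_contra hne
  have hmid : midpoint ℝ x y ∈ interior B :=
    hB x hxB y hyB hne (midpoint_mem_openSegment x y)
  have hfmid : f (midpoint ℝ x y) = f x := by
    rw [← f.coe_toAffineMap, AffineMap.map_midpoint, f.coe_toAffineMap, hxy, midpoint_self]
  exact hxf.2 (hfmid ▸ hf.image_interior_subset B (mem_image_of_mem f hmid))

theorem IsCompact.bijOn_preimage_frontier_image {X Y : Type*} [TopologicalSpace X]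
    [TopologicalSpace Y] [T2Space Y] {B : Set X} (hB : IsCompact B) {f : X → Y}
    (hf : Continuous f) (hinj : InjOn f {x ∈ B | f x ∈ frontier (f '' B)}) :
    BijOn f {x ∈ B | f x ∈ frontier (f '' B)} (frontier (f '' B)) := by
  refine ⟨fun x hx => hx.2, hinj, fun y hy => ?_⟩
  obtain ⟨x, hxB, rfl⟩ := (hB.image hf).isClosed.frontier_subset hy
  exact ⟨x, ⟨hxB, hy⟩, rfl⟩

theorem IsCompact.exists_homeomorph_preimage_frontier_image {X Y : Type*} [TopologicalSpace X]
    [TopologicalSpace Y] [T2Space Y] {B : Set X} (hB : IsCompact B) {f : X → Y}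
    (hf : Continuous f) (hinj : InjOn f {x ∈ B | f x ∈ frontier (f '' B)}) :
    ∃ h : {x ∈ B | f x ∈ frontier (f '' B)} ≃ₜ frontier (f '' B), ∀ x, (h x : Y) = f x := by
  have hD : IsCompact {x ∈ B | f x ∈ frontier (f '' B)} :=
    hB.inter_right (isClosed_frontier.preimage hf)
  have : CompactSpace {x ∈ B | f x ∈ frontier (f '' B)} := isCompact_iff_compactSpace.mp hD
  let e := (hB.bijOn_preimage_frontier_image hf hinj).equiv
  have he : Continuous e := (hf.comp continuous_subtype_val).subtype_mk _
  exact ⟨he.homeoOfEquivCompactToT2, fun _ => rfl⟩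

theorem stmt3_general (n : ℕ) (B : Set (EuclideanSpace ℝ (Fin (n + 1))))
    (hBc : IsCompact B) (hBsc : StrictlyConvexSet B)
    (v : EuclideanSpace ℝ (Fin (n + 1))) :
    ∃ h : D0 B v ≃ₜ (frontier (pv v '' B)),
      ∀ x : D0 B v, (h x : ↥((ℝ ∙ v)ᗮ)) = pv v (x : EuclideanSpace ℝ (Fin (n + 1))) := by
  have hsurj : Function.Surjective (pv v) := fun w =>
    ⟨w, Submodule.orthogonalProjectionOnto_mem_subspace_eq_self w⟩
  have hinj := hBsc.injOn_preimage_frontier_image (f := (pv v).toLinearMap)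
    ((pv v).isOpenMap hsurj)
  exact hBc.exists_homeomorph_preimage_frontier_image (pv v).continuous hinj

theorem stmt3 (n : ℕ) (B : Set (EuclideanSpace ℝ (Fin (n + 1))))
    (hBc : IsCompact B) (hBsc : StrictlyConvexSet B) (hBint : (interior B).Nonempty)
    (v : EuclideanSpace ℝ (Fin (n + 1))) (hv : ‖v‖ = 1) :
    ∃ h : D0 B v ≃ₜ (frontier (pv v '' B)),
      ∀ x : D0 B v, (h x : ↥((ℝ ∙ v)ᗮ)) = pv v (x : EuclideanSpace ℝ (Fin (n + 1))) :=
  stmt3_general n B hBc hBsc v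
end

section
/- Let B ⊆ ℝ^(n+1) be compact, strictly convex, with non-empty interior, v a unit vector, and S = ∂B. For every y in the interior of p_v(B), the fiber p_v^{-1}(y) ∩ S consists of exactly two distinct points. -/
open Metric Set
open scoped RealInnerProductSpace

/-!
Since `B` is convex with non-empty interior, the fibre over a point `y` interior to `p_v(B)`
contains an interior point `z` of `B`: for small `t > 0` the point `y + t (y - p_v c)`, with
`c ∈ int B`, is still the projection of some `b ∈ B`, and `y` is the projection of a convex
combination of `c` and `b` with positive weight on `c`. The fibre is the line `z + ℝ v`, which
meets the compact convex set `B` in an interval `[α, β]` with `α < 0 < β`; each point strictly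
inside lies on a segment from `z` to an endpoint, hence in the interior of `B`, so the line meets
`∂B` exactly in `z + α v` and `z + β v`.
-/

open Filter Topology

theorem StrictlyConvexSet.strictConvex {V : Type*} [AddCommGroup V] [Module ℝ V]
    [TopologicalSpace V] {B : Set V} (hB : StrictlyConvexSet B) : StrictConvex ℝ B :=
  fun x hx y hy hxy a b ha hb hab => hB x hx y hy hxy ⟨a, b, ha, hb, hab, rfl⟩

theorem Convex.mem_image_interior_of_mem_interior_image {E F : Type*}
    [AddCommGroup E] [Module ℝ E] [TopologicalSpace E] [IsTopologicalAddGroup E]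
    [ContinuousConstSMul ℝ E] [AddCommGroup F] [Module ℝ F] [TopologicalSpace F]
    [ContinuousAdd F] [ContinuousSMul ℝ F] {s : Set E} (hs : Convex ℝ s)
    (hs' : (interior s).Nonempty) (f : E →ₗ[ℝ] F) {y : F} (hy : y ∈ interior (f '' s)) :
    y ∈ f '' interior s := by
  obtain ⟨c, hc⟩ := hs'
  have hlim : Tendsto (fun t : ℝ => y + t • (y - f c)) (𝓝[>] 0) (𝓝 y) :=
    (Continuous.tendsto' (by fun_prop) 0 y (by simp)).mono_left nhdsWithin_le_nhds
  obtain ⟨t, ⟨b, hb, hfb⟩, ht⟩ :=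
    ((hlim.eventually (mem_interior_iff_mem_nhds.mp hy)).and self_mem_nhdsWithin).exists
  refine ⟨(t / (1 + t)) • c + (1 / (1 + t)) • b,
    hs.combo_interior_self_mem_interior hc hb (by positivity) (by positivity) (by field_simp; ring),
    ?_⟩
  rw [map_add, map_smul, map_smul, hfb]
  match_scalars <;> field_simp; ring

theorem Convex.frontier_inter_line_eq_pair {E : Type*} [NormedAddCommGroup E] [NormedSpace ℝ E]
    {s : Set E} (hs : Convex ℝ s) (hsc : IsCompact s) {z v : E} (hz : z ∈ interior s)
    (hv : ‖v‖ = 1) :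
    ∃ x₁ x₂, x₁ ≠ x₂ ∧ frontier s ∩ range (fun t : ℝ => z + t • v) = {x₁, x₂} := by
  set g : ℝ → E := fun t => z + t • v
  have hg : Isometry g := Isometry.of_dist_eq fun a b => by
    simp [g, dist_eq_norm, ← sub_smul, norm_smul, hv]
  have hIconv : Convex ℝ (g ⁻¹' s) :=
    (hs.translate_preimage_right z).linear_preimage (LinearMap.toSpanSingleton ℝ E v)
  have hI : g ⁻¹' s = Icc (sInf (g ⁻¹' s)) (sSup (g ⁻¹' s)) :=
    eq_Icc_of_connected_compact (hIconv.isConnected ⟨0, by simpa [g] using interior_subset hz⟩)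
      (hg.isClosedEmbedding.isCompact_preimage hsc)
  set a := sInf (g ⁻¹' s)
  set b := sSup (g ⁻¹' s)
  have hJI : g ⁻¹' interior s ⊆ Ioo a b :=
    interior_Icc (a := a) (b := b) ▸ interior_maximal (hI ▸ preimage_mono interior_subset)
      (isOpen_interior.preimage hg.continuous)
  have h0 : 0 ∈ Ioo a b := hJI (by simpa [g] using hz)
  have hab : a < b := h0.1.trans h0.2
  have hmul_mem : ∀ c ∈ g ⁻¹' s, ∀ μ : ℝ, 0 ≤ μ → μ < 1 → μ * c ∈ g ⁻¹' interior s := by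
    intro c hc μ hμ0 hμ1
    have := hs.combo_interior_self_mem_interior hz hc (sub_pos.mpr hμ1) hμ0 (sub_add_cancel 1 μ)
    rw [mem_preimage]
    convert this using 1
    simp only [g]
    module
  have hJ : g ⁻¹' interior s = Ioo a b := by
    refine hJI.antisymm fun t ht => ?_
    rcases le_or_gt 0 t with ht0 | ht0
    · have hb : b ∈ g ⁻¹' s := hI ▸ right_mem_Icc.mpr hab.le
      simpa [div_mul_cancel₀ t h0.2.ne'] using
        hmul_mem b hb (t / b) (div_nonneg ht0 h0.2.le) ((div_lt_one h0.2).mpr ht.2)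
    · have ha : a ∈ g ⁻¹' s := hI ▸ left_mem_Icc.mpr hab.le
      simpa [div_mul_cancel₀ t h0.1.ne] using
        hmul_mem a ha (t / a) (div_nonneg_of_nonpos ht0.le h0.1.le)
          ((div_lt_one_of_neg h0.1).mpr ht.1)
  refine ⟨g a, g b, hg.injective.ne hab.ne, ?_⟩
  rw [← image_preimage_eq_inter_range, hsc.isClosed.frontier_eq, preimage_sdiff, hJ, hI,
    Icc_sdiff_Ioo_same hab.le, image_pair]

theorem pv_eq_pv_iff {n : ℕ} {v x z : EuclideanSpace ℝ (Fin (n + 1))} :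
    pv v x = pv v z ↔ ∃ t : ℝ, z + t • v = x := by
  rw [← sub_eq_zero, ← map_sub, pv, Submodule.orthogonalProjectionOnto_eq_zero_iff,
    Submodule.orthogonal_orthogonal, Submodule.mem_span_singleton]
  simp only [eq_sub_iff_add_eq, add_comm]

theorem stmt4 (n : ℕ) (B : Set (EuclideanSpace ℝ (Fin (n + 1))))
    (hBc : IsCompact B) (hBsc : StrictlyConvexSet B) (hBint : (interior B).Nonempty)
    (v : EuclideanSpace ℝ (Fin (n + 1))) (hv : ‖v‖ = 1)
    (y : ↥((ℝ ∙ v)ᗮ)) (hy : y ∈ interior (pv v '' B)) :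
    ∃ x₁ x₂ : EuclideanSpace ℝ (Fin (n + 1)), x₁ ≠ x₂ ∧
      {x | x ∈ frontier B ∧ pv v x = y} = {x₁, x₂} := by
  have hB : Convex ℝ B := hBsc.strictConvex.convex
  obtain ⟨z, hz, rfl⟩ := hB.mem_image_interior_of_mem_interior_image hBint (pv v).toLinearMap hy
  obtain ⟨x₁, x₂, hne, hline⟩ := hB.frontier_inter_line_eq_pair hBc hz hv
  refine ⟨x₁, x₂, hne, hline ▸ ?_⟩
  ext x
  simp [pv_eq_pv_iff]
end

section
/- Let B ⊆ ℝ^(n+1) be compact, strictly convex, with non-empty interior, v a unit vector, S = ∂B. Define U_v^+ (resp. U_v^-) as the set of points x ∈ S with p_v(x) in the interior of p_v(B) and x·v maximal (resp. minimal) on the fiber p_v^{-1}(p_v(x)) ∩ B. Then U_v^+ and U_v^- are disjoint open subsets of S. -/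
/-! Convexity lifts every point of the interior of `p_v(B)` to an interior point `z` of `B`.
A point `x` of `U_v^+` lies strictly above `z` on its fibre (a short vertical segment through `z`
stays in `B`), so it cannot also be lowest there. Near `x`, the fibre of a boundary point `x'`
still meets `B` at the height of `z`, below `x'`; a point of `B` above `x'` on that fibre would
put `x'` on an open segment inside `B`, hence in the interior of `B` by strict convexity. -/

open Metric Set
open scoped RealInnerProductSpace

open Filter Topology

lemma exists_pos_add_smul_mem {E : Type*} [AddCommGroup E] [Module ℝ E] [TopologicalSpace E]
    [ContinuousAdd E] [ContinuousSMul ℝ E] {S : Set E} {a : E} (ha : a ∈ interior S) (d : E) :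
    ∃ t > (0 : ℝ), a + t • d ∈ S := by
  have hlim : Tendsto (fun t : ℝ => a + t • d) (𝓝[>] 0) (𝓝 a) :=
    (Continuous.tendsto' (by fun_prop) 0 a (by simp)).mono_left nhdsWithin_le_nhds
  obtain ⟨t, hS, ht⟩ :=
    ((hlim.eventually (mem_interior_iff_mem_nhds.1 ha)).and self_mem_nhdsWithin).exists
  exact ⟨t, ht, hS⟩

lemma StrictlyConvexSet.convex {E : Type*} [AddCommGroup E] [Module ℝ E] [TopologicalSpace E]
    {B : Set E} (hB : StrictlyConvexSet B) : Convex ℝ B := by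
  refine convex_iff_segment_subset.2 fun x hx y hy => ?_
  rcases eq_or_ne x y with rfl | hxy
  · simpa using hx
  rw [← insert_endpoints_openSegment]
  exact insert_subset hx (insert_subset hy ((hB x hx y hy hxy).trans interior_subset))

lemma StrictlyConvexSet.mem_interior_of_fiber_between {E F : Type*} [AddCommGroup E]
    [Module ℝ E] [TopologicalSpace E] [AddCommGroup F] [Module ℝ F] {B : Set E}
    (hB : StrictlyConvexSet B) {P : E →ₗ[ℝ] F} {ℓ : E →ₗ[ℝ] ℝ}
    (hPℓ : Disjoint P.ker ℓ.ker) {u x y : E} (hu : u ∈ B) (hy : y ∈ B)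
    (hux : P u = P x) (hyx : P y = P x) (hℓux : ℓ u < ℓ x) (hℓxy : ℓ x < ℓ y) :
    x ∈ interior B := by
  have hpos : 0 < ℓ y - ℓ u := by linarith
  set t := (ℓ x - ℓ u) / (ℓ y - ℓ u)
  have ht : t * (ℓ y - ℓ u) = ℓ x - ℓ u := div_mul_cancel₀ _ hpos.ne'
  have hcombo : (1 - t) • u + t • y = x := by
    rw [← sub_eq_zero]
    refine Submodule.disjoint_def.1 hPℓ _ ?_ ?_
    · rw [LinearMap.mem_ker, map_sub, map_add, map_smul, map_smul, hux, hyx]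
      module
    · rw [LinearMap.mem_ker, map_sub, map_add, map_smul, map_smul, smul_eq_mul, smul_eq_mul]
      linarith
  refine hB u hu y hy (by rintro rfl; linarith) ⟨1 - t, t, ?_, ?_, by ring, hcombo⟩
  · rw [sub_pos, div_lt_one hpos]; linarith
  · exact div_pos (by linarith) hpos

section FiberMax

variable {E F : Type*} [AddCommGroup E] [Module ℝ E] [TopologicalSpace E]
  [IsTopologicalAddGroup E] [ContinuousSMul ℝ E] [AddCommGroup F] [Module ℝ F]
  [TopologicalSpace F]

variable (B : Set E) (P : E →L[ℝ] F) (ℓ : E →L[ℝ] ℝ)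

def fiberMaxFrontier : Set E :=
  {x | x ∈ frontier B ∧ P x ∈ interior (P '' B) ∧ ∀ y ∈ B, P y = P x → ℓ y ≤ ℓ x}

variable {B P ℓ}

lemma apply_lt_of_mem_fiberMaxFrontier {w : E} (hPw : P w = 0) (hℓw : 0 < ℓ w) {x z : E}
    (hx : x ∈ fiberMaxFrontier B P ℓ) (hz : z ∈ interior B) (hzx : P z = P x) : ℓ z < ℓ x := by
  obtain ⟨t, ht, hzt⟩ := exists_pos_add_smul_mem hz w
  have hle := hx.2.2 _ hzt (by rw [map_add, map_smul, hPw, smul_zero, add_zero, hzx])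
  rw [map_add, map_smul, smul_eq_mul] at hle
  nlinarith

variable [IsTopologicalAddGroup F] [ContinuousSMul ℝ F]

lemma Convex.exists_mem_interior_map_eq (hB : Convex ℝ B) (hBint : (interior B).Nonempty)
    {c : F} (hc : c ∈ interior (P '' B)) : ∃ z ∈ interior B, P z = c := by
  obtain ⟨p, hp⟩ := hBint
  obtain ⟨s, hs, y, hy, hPy⟩ := exists_pos_add_smul_mem hc (c - P p)
  -- `(s + 1) • c = s • P p + P y`
  refine ⟨(s / (s + 1)) • p + (s + 1)⁻¹ • y,
    hB.combo_interior_self_mem_interior hp hy (by positivity) (by positivity) (by field_simp), ?_⟩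
  rw [map_add, map_smul, map_smul, hPy]
  match_scalars <;> field_simp <;> ring

lemma disjoint_fiberMaxFrontier_neg (hB : Convex ℝ B) (hBint : (interior B).Nonempty) {w : E}
    (hPw : P w = 0) (hℓw : 0 < ℓ w) :
    Disjoint (fiberMaxFrontier B P ℓ) (fiberMaxFrontier B P (-ℓ)) := by
  refine Set.disjoint_left.2 fun x hx hx' => ?_
  obtain ⟨z, hz, hzx⟩ := hB.exists_mem_interior_map_eq hBint hx.2.1
  have h₁ := apply_lt_of_mem_fiberMaxFrontier hPw hℓw hx hz hzx
  have h₂ := apply_lt_of_mem_fiberMaxFrontier (w := -w) (by simp [hPw]) (by simpa using hℓw)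
    hx' hz hzx
  rw [neg_apply, neg_apply, neg_lt_neg_iff] at h₂
  exact h₁.asymm h₂

lemma eventually_mem_fiberMaxFrontier (hB : StrictlyConvexSet B) (hBint : (interior B).Nonempty)
    (hPℓ : Disjoint P.ker ℓ.ker) {w : E} (hPw : P w = 0) (hℓw : ℓ w = 1)
    {x : E} (hx : x ∈ fiberMaxFrontier B P ℓ) :
    ∀ᶠ x' in 𝓝 x, x' ∈ frontier B → x' ∈ fiberMaxFrontier B P ℓ := by
  obtain ⟨z, hz, hzx⟩ := hB.convex.exists_mem_interior_map_eq hBint hx.2.1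
  have hzlt : ℓ z < ℓ x := apply_lt_of_mem_fiberMaxFrontier hPw (hℓw ▸ one_pos) hx hz hzx
  -- `u x'` is the point of the fibre over `P x'` at the height of `z`
  set u : E → E := fun x' => z + (x' - x) - ℓ (x' - x) • w
  have hu : Tendsto u (𝓝 x) (𝓝 z) :=
    Continuous.tendsto' (by fun_prop) x z (by simp [u])
  filter_upwards [hu.eventually (mem_interior_iff_mem_nhds.1 hz),
    P.continuous.continuousAt.eventually (isOpen_interior.mem_nhds hx.2.1),
    ℓ.continuous.continuousAt.eventually (lt_mem_nhds hzlt)] with x' hux' hPx' hℓx' hx'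
  refine ⟨hx', hPx', fun y hy hyx' => not_lt.1 fun hlt => ?_⟩
  have huP : P (u x') = P x' := by simp [u, hPw, hzx]
  have huℓ : ℓ (u x') = ℓ z := by simp [u, hℓw]
  exact Set.disjoint_left.1 disjoint_interior_frontier
    (hB.mem_interior_of_fiber_between hPℓ hux' hy huP hyx' (huℓ ▸ hℓx') hlt) hx'

lemma isOpen_fiberMaxFrontier (hB : StrictlyConvexSet B) (hBint : (interior B).Nonempty)
    (hPℓ : Disjoint P.ker ℓ.ker) {w : E} (hPw : P w = 0) (hℓw : ℓ w = 1) :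
    IsOpen (Subtype.val ⁻¹' fiberMaxFrontier B P ℓ : Set (frontier B)) := by
  refine isOpen_iff_mem_nhds.2 fun x hx => (mem_nhds_subtype _ _ _).2 ?_
  exact ⟨_, eventually_mem_fiberMaxFrontier hB hBint hPℓ hPw hℓw hx, fun x' hx' => hx' x'.2⟩

end FiberMax

section Projection

variable {n : ℕ} {v : EuclideanSpace ℝ (Fin (n + 1))}

lemma Uplus_eq_fiberMaxFrontier (B : Set (EuclideanSpace ℝ (Fin (n + 1)))) :
    Uplus B v = fiberMaxFrontier B (pv v) (innerSL ℝ v) := by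
  simp only [Uplus, fiberMaxFrontier, innerSL_apply_apply, real_inner_comm v]

lemma Uminus_eq_fiberMaxFrontier (B : Set (EuclideanSpace ℝ (Fin (n + 1)))) :
    Uminus B v = fiberMaxFrontier B (pv v) (-innerSL ℝ v) := by
  simp only [Uminus, fiberMaxFrontier, neg_apply, innerSL_apply_apply, real_inner_comm v,
    neg_le_neg_iff]

lemma pv_self : pv v v = 0 :=
  Submodule.orthogonalProjectionOnto_orthogonalComplement_singleton_eq_zero v

lemma disjoint_ker_pv_ker_innerSL (hv : v ≠ 0) : Disjoint (pv v).ker (innerSL ℝ v).ker := by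
  rw [pv, Submodule.ker_orthogonalProjectionOnto, Submodule.orthogonal_orthogonal,
    disjoint_comm, Submodule.disjoint_span_singleton' hv]
  simpa [LinearMap.mem_ker] using hv

end Projection

theorem stmt5_general (n : ℕ) (B : Set (EuclideanSpace ℝ (Fin (n + 1))))
    (hBsc : StrictlyConvexSet B) (hBint : (interior B).Nonempty)
    (v : EuclideanSpace ℝ (Fin (n + 1))) (hv : ‖v‖ = 1) :
    Disjoint (Uplus B v) (Uminus B v) ∧
      IsOpen (Subtype.val ⁻¹' (Uplus B v) : Set (frontier B)) ∧
      IsOpen (Subtype.val ⁻¹' (Uminus B v) : Set (frontier B)) := by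
  have hvv : innerSL ℝ v v = 1 := by
    rw [innerSL_apply_apply, real_inner_self_eq_norm_sq, hv, one_pow]
  have hker := disjoint_ker_pv_ker_innerSL (norm_ne_zero_iff.1 (hv ▸ one_ne_zero))
  rw [Uplus_eq_fiberMaxFrontier, Uminus_eq_fiberMaxFrontier]
  refine ⟨disjoint_fiberMaxFrontier_neg hBsc.convex hBint pv_self (hvv ▸ one_pos),
    isOpen_fiberMaxFrontier hBsc hBint hker pv_self hvv,
    isOpen_fiberMaxFrontier hBsc hBint (by simpa using hker) (w := -v) (by simp [pv_self])
      (by rw [neg_apply, map_neg, hvv, neg_neg])⟩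

theorem stmt5 (n : ℕ) (B : Set (EuclideanSpace ℝ (Fin (n + 1))))
    (hBc : IsCompact B) (hBsc : StrictlyConvexSet B) (hBint : (interior B).Nonempty)
    (v : EuclideanSpace ℝ (Fin (n + 1))) (hv : ‖v‖ = 1) :
    Disjoint (Uplus B v) (Uminus B v) ∧
      IsOpen (Subtype.val ⁻¹' (Uplus B v) : Set (frontier B)) ∧
      IsOpen (Subtype.val ⁻¹' (Uminus B v) : Set (frontier B)) :=
  stmt5_general n B hBsc hBint v hv
end

section
/- With B compact strictly convex with non-empty interior in ℝ^(n+1), v a unit vector, S = ∂B, and D_v^± := D_v^0 ∪ U_v^±, the restriction of the projection p_v to D_v^+ (and likewise D_v^-) is a homeomorphism onto p_v(B). -/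
open Metric Set
open scoped RealInnerProductSpace

/-!
Over each `u ∈ p_v(B)` the heights `⟪y, v⟫` of the points `y` of the fibre form a compact set,
whose maximum `maxHeight u` is a concave function of `u` because `B` is convex; hence it is
continuous on the interior of `p_v(B)`. By strict convexity the fibre over a frontier point of
`p_v(B)` is a single point, and over an interior point the maximiser of the height lies on `∂B`.
So `p_v` maps `D_v^+` bijectively onto `p_v(B)`, and continuity of `maxHeight` makes `D_v^+`
closed, hence compact: a continuous bijection from a compact space onto a Hausdorff one is a
homeomorphism. Measuring heights along `-v` instead of `v` gives `D_v^-`.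
-/

open Filter Topology

theorem Set.InjOn.exists_homeomorph_image {X Y : Type*} [TopologicalSpace X] [TopologicalSpace Y]
    [T2Space Y] {f : X → Y} {s : Set X} (hinj : InjOn f s) (hf : Continuous f)
    (hs : IsCompact s) : ∃ h : s ≃ₜ f '' s, ∀ x : s, (h x : Y) = f x := by
  have : CompactSpace s := isCompact_iff_compactSpace.mp hs
  exact ⟨Continuous.homeoOfEquivCompactToT2 (f := Equiv.Set.imageOfInjOn f s hinj)
    ((hf.comp continuous_subtype_val).subtype_mk _), fun _ => rfl⟩

section

variable {n : ℕ} {B : Set (EuclideanSpace ℝ (Fin (n + 1)))} {v w : EuclideanSpace ℝ (Fin (n + 1))}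

theorem pv_surjective (v : EuclideanSpace ℝ (Fin (n + 1))) : Function.Surjective (pv v) :=
  fun u => ⟨u, Submodule.orthogonalProjectionOnto_mem_subspace_eq_self u⟩

theorem pv_add_smul_self (x : EuclideanSpace ℝ (Fin (n + 1))) (t : ℝ) :
    pv v (x + t • v) = pv v x := by
  have hv : pv v v = 0 := Submodule.orthogonalProjectionOnto_eq_zero_iff.2
    (Submodule.le_orthogonal_orthogonal _ (Submodule.mem_span_singleton_self v))
  rw [map_add, map_smul, hv, smul_zero, add_zero]

theorem eq_of_pv_eq_of_inner_eq (hvw : ⟪v, w⟫ ≠ 0) {x y : EuclideanSpace ℝ (Fin (n + 1))}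
    (hp : pv v x = pv v y) (hi : ⟪x, w⟫ = ⟪y, w⟫) : x = y := by
  have hker : pv v (x - y) = 0 := by rw [map_sub, hp, sub_self]
  rw [pv, Submodule.orthogonalProjectionOnto_eq_zero_iff, Submodule.orthogonal_orthogonal,
    Submodule.mem_span_singleton] at hker
  obtain ⟨c, hc⟩ := hker
  have hc0 : c * ⟪v, w⟫ = 0 := by rw [← real_inner_smul_left, hc, inner_sub_left, hi, sub_self]
  rw [← sub_eq_zero, ← hc, (mul_eq_zero.1 hc0).resolve_right hvw, zero_smul]

def fiberHeights (B : Set (EuclideanSpace ℝ (Fin (n + 1)))) (v w : EuclideanSpace ℝ (Fin (n + 1)))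
    (u : ↥((ℝ ∙ v)ᗮ)) : Set ℝ :=
  (⟪·, w⟫) '' {y ∈ B | pv v y = u}

noncomputable def maxHeight (B : Set (EuclideanSpace ℝ (Fin (n + 1))))
    (v w : EuclideanSpace ℝ (Fin (n + 1))) (u : ↥((ℝ ∙ v)ᗮ)) : ℝ :=
  sSup (fiberHeights B v w u)

theorem isCompact_fiberHeights (hBc : IsCompact B) (u : ↥((ℝ ∙ v)ᗮ)) :
    IsCompact (fiberHeights B v w u) :=
  (hBc.inter_right (isClosed_singleton.preimage (pv v).continuous)).image
    (continuous_id.inner continuous_const)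

theorem le_maxHeight (hBc : IsCompact B) {y : EuclideanSpace ℝ (Fin (n + 1))} (hy : y ∈ B) :
    ⟪y, w⟫ ≤ maxHeight B v w (pv v y) :=
  le_csSup (isCompact_fiberHeights hBc _).bddAbove ⟨y, ⟨hy, rfl⟩, rfl⟩

theorem exists_inner_eq_maxHeight (hBc : IsCompact B) {u : ↥((ℝ ∙ v)ᗮ)} (hu : u ∈ pv v '' B) :
    ∃ y ∈ B, pv v y = u ∧ ⟪y, w⟫ = maxHeight B v w u := by
  obtain ⟨x, hx, rfl⟩ := hu
  obtain ⟨y, ⟨hy, hpy⟩, hmax⟩ :=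
    (isCompact_fiberHeights hBc (pv v x)).sSup_mem ⟨_, x, ⟨hx, rfl⟩, rfl⟩
  exact ⟨y, hy, hpy, hmax⟩

theorem concaveOn_maxHeight (hBc : IsCompact B) (hB : Convex ℝ B) :
    ConcaveOn ℝ (pv v '' B) (maxHeight B v w) := by
  refine ⟨hB.linear_image (pv v : EuclideanSpace ℝ (Fin (n + 1)) →ₗ[ℝ] ↥((ℝ ∙ v)ᗮ)),
    fun u₁ hu₁ u₂ hu₂ a b ha hb hab => ?_⟩
  obtain ⟨y₁, hy₁, rfl, h₁⟩ := exists_inner_eq_maxHeight (w := w) hBc hu₁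
  obtain ⟨y₂, hy₂, rfl, h₂⟩ := exists_inner_eq_maxHeight (w := w) hBc hu₂
  calc a • maxHeight B v w (pv v y₁) + b • maxHeight B v w (pv v y₂)
      = ⟪a • y₁ + b • y₂, w⟫ := by
        rw [inner_add_left, real_inner_smul_left, real_inner_smul_left, h₁, h₂, smul_eq_mul,
          smul_eq_mul]
    _ ≤ maxHeight B v w (pv v (a • y₁ + b • y₂)) := le_maxHeight hBc (hB hy₁ hy₂ ha hb hab)
    _ = maxHeight B v w (a • pv v y₁ + b • pv v y₂) := by rw [map_add, map_smul, map_smul]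

theorem continuousAt_maxHeight (hBc : IsCompact B) (hB : Convex ℝ B) {u : ↥((ℝ ∙ v)ᗮ)}
    (hu : u ∈ interior (pv v '' B)) : ContinuousAt (maxHeight B v w) u :=
  (concaveOn_maxHeight hBc hB).continuousOn_interior.continuousAt (isOpen_interior.mem_nhds hu)

theorem eq_of_pv_eq_of_mem_frontier (hB : StrictlyConvexSet B)
    {x y : EuclideanSpace ℝ (Fin (n + 1))} (hx : x ∈ B) (hy : y ∈ B) (hxy : pv v x = pv v y)
    (hfr : pv v x ∈ frontier (pv v '' B)) : x = y := by
  by_contra hne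
  have hmid : (1 / 2 : ℝ) • x + (1 / 2 : ℝ) • y ∈ interior B :=
    hB x hx y hy hne ⟨1 / 2, 1 / 2, by norm_num, by norm_num, by norm_num, rfl⟩
  refine hfr.2 (interior_maximal (image_mono interior_subset)
    ((pv v).isOpenMap (pv_surjective v) _ isOpen_interior) ⟨_, hmid, ?_⟩)
  rw [map_add, map_smul, map_smul, ← hxy, ← add_smul]
  norm_num

theorem notMem_interior_of_forall_inner_le (hvw : ⟪v, w⟫ ≠ 0)
    {y : EuclideanSpace ℝ (Fin (n + 1))}
    (hmax : ∀ z ∈ B, pv v z = pv v y → ⟪z, w⟫ ≤ ⟪y, w⟫) : y ∉ interior B := by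
  intro hy
  have hcont : Tendsto (fun t : ℝ => y + (t * ⟪v, w⟫) • v) (𝓝[>] 0) (𝓝 y) :=
    (Continuous.tendsto' (by fun_prop) 0 y (by simp)).mono_left nhdsWithin_le_nhds
  obtain ⟨t, ht, htpos⟩ :=
    ((hcont.eventually (isOpen_interior.mem_nhds hy)).and self_mem_nhdsWithin).exists
  have hle := hmax _ (interior_subset ht) (pv_add_smul_self _ _)
  rw [inner_add_left, real_inner_smul_left] at hle
  nlinarith [mul_pos (Set.mem_Ioi.1 htpos) (mul_self_pos.2 hvw)]

/-- `Uplus` with heights measured along `w`: `Uplus B v = upperRegion B v v` and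
`Uminus B v = upperRegion B v (-v)`. -/
def upperRegion (B : Set (EuclideanSpace ℝ (Fin (n + 1))))
    (v w : EuclideanSpace ℝ (Fin (n + 1))) : Set (EuclideanSpace ℝ (Fin (n + 1))) :=
  {x | x ∈ frontier B ∧ pv v x ∈ interior (pv v '' B) ∧
    ∀ y ∈ B, pv v y = pv v x → ⟪y, w⟫ ≤ ⟪x, w⟫}

theorem Uminus_eq_upperRegion_neg : Uminus B v = upperRegion B v (-v) := by
  ext x
  simp only [Uminus, upperRegion, mem_ofPred_eq, inner_neg_right, neg_le_neg_iff]

theorem inner_eq_maxHeight_of_mem_upperRegion (hBc : IsCompact B)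
    {x : EuclideanSpace ℝ (Fin (n + 1))} (hx : x ∈ upperRegion B v w) :
    ⟪x, w⟫ = maxHeight B v w (pv v x) := by
  have hxB : x ∈ B := hBc.isClosed.frontier_subset hx.1
  obtain ⟨y, hy, hpy, hymax⟩ := exists_inner_eq_maxHeight (w := w) hBc ⟨x, hxB, rfl⟩
  exact le_antisymm (le_maxHeight hBc hxB) (hymax ▸ hx.2.2 y hy hpy)

theorem D0_union_upperRegion_subset (hBc : IsCompact B) : D0 B v ∪ upperRegion B v w ⊆ B := by
  rintro x (hx | hx)
  exacts [hx.1, hBc.isClosed.frontier_subset hx.1]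

theorem injOn_pv_D0_union_upperRegion (hBc : IsCompact B) (hB : StrictlyConvexSet B)
    (hvw : ⟪v, w⟫ ≠ 0) : InjOn (pv v) (D0 B v ∪ upperRegion B v w) := by
  rintro x (hx | hx) y (hy | hy) hxy
  · exact eq_of_pv_eq_of_mem_frontier hB hx.1 hy.1 hxy hx.2
  · exact absurd (hxy ▸ hy.2.1) hx.2.2
  · exact absurd (hxy ▸ hx.2.1) hy.2.2
  · refine eq_of_pv_eq_of_inner_eq hvw hxy ?_
    rw [inner_eq_maxHeight_of_mem_upperRegion hBc hx,
      inner_eq_maxHeight_of_mem_upperRegion hBc hy, hxy]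

theorem image_pv_D0_union_upperRegion (hBc : IsCompact B) (hvw : ⟪v, w⟫ ≠ 0) :
    pv v '' (D0 B v ∪ upperRegion B v w) = pv v '' B := by
  refine (image_mono (D0_union_upperRegion_subset hBc)).antisymm ?_
  rintro _ ⟨x, hx, rfl⟩
  obtain ⟨y, hy, hpy, hymax⟩ := exists_inner_eq_maxHeight (w := w) hBc ⟨x, hx, rfl⟩
  refine ⟨y, ?_, hpy⟩
  have hmax : ∀ z ∈ B, pv v z = pv v y → ⟪z, w⟫ ≤ ⟪y, w⟫ := fun z hz hzy =>
    hymax ▸ hpy ▸ hzy ▸ le_maxHeight hBc hz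
  by_cases hfr : pv v y ∈ frontier (pv v '' B)
  · exact Or.inl ⟨hy, hfr⟩
  · exact Or.inr ⟨(mem_frontier_iff_notMem_interior hy).2
      (notMem_interior_of_forall_inner_le hvw hmax),
      (mem_interior_iff_notMem_frontier (mem_image_of_mem _ hy)).2 hfr, hmax⟩

theorem isClosed_D0_union_upperRegion (hBc : IsCompact B) (hB : Convex ℝ B) :
    IsClosed (D0 B v ∪ upperRegion B v w) := by
  refine isClosed_of_closure_subset fun x hx => ?_
  have hxB : x ∈ B := closure_minimal (D0_union_upperRegion_subset hBc) hBc.isClosed hx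
  by_cases hfr : pv v x ∈ frontier (pv v '' B)
  · exact Or.inl ⟨hxB, hfr⟩
  have hint := (mem_interior_iff_notMem_frontier (mem_image_of_mem _ hxB)).2 hfr
  set W := pv v ⁻¹' interior (pv v '' B)
  have hxW : x ∈ closure ((D0 B v ∪ upperRegion B v w) ∩ W) :=
    (isOpen_interior.preimage (pv v).continuous).closure_inter ⟨hx, hint⟩
  have hDW : (D0 B v ∪ upperRegion B v w) ∩ W ⊆ upperRegion B v w :=
    fun y ⟨hy, hyW⟩ => hy.resolve_left fun h => h.2.2 hyW
  refine Or.inr ⟨closure_minimal (hDW.trans fun y hy => hy.1) isClosed_frontier hxW, hint, ?_⟩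
  -- `maxHeight` is continuous over the interior, so `⟪·, w⟫ = maxHeight ∘ pv` passes to the limit
  set g := fun z => ⟪z, w⟫ - maxHeight B v w (pv v z)
  have hg : ContinuousAt g x := (continuous_id.inner continuous_const).continuousAt.sub
    ((continuousAt_maxHeight hBc hB hint).comp (pv v).continuous.continuousAt)
  have himg : g '' ((D0 B v ∪ upperRegion B v w) ∩ W) ⊆ {0} := by
    rintro _ ⟨z, hz, rfl⟩
    exact sub_eq_zero.2 (inner_eq_maxHeight_of_mem_upperRegion hBc (hDW hz))
  have hgx : g x = 0 := by
    simpa using closure_mono himg (hg.continuousWithinAt.mem_closure_image hxW)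
  intro y hy hyx
  calc ⟪y, w⟫ ≤ maxHeight B v w (pv v y) := le_maxHeight hBc hy
    _ = ⟪x, w⟫ := by rw [hyx]; linarith [hgx]

theorem exists_homeomorph_D0_union_upperRegion (hBc : IsCompact B) (hB : StrictlyConvexSet B)
    (hvw : ⟪v, w⟫ ≠ 0) :
    ∃ h : ↥(D0 B v ∪ upperRegion B v w) ≃ₜ pv v '' B,
      ∀ x : ↥(D0 B v ∪ upperRegion B v w),
        (h x : ↥((ℝ ∙ v)ᗮ)) = pv v (x : EuclideanSpace ℝ (Fin (n + 1))) := by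
  rw [← image_pv_D0_union_upperRegion hBc hvw]
  exact (injOn_pv_D0_union_upperRegion hBc hB hvw).exists_homeomorph_image (pv v).continuous
    (hBc.of_isClosed_subset (isClosed_D0_union_upperRegion hBc hB.strictConvex.convex)
      (D0_union_upperRegion_subset hBc))

end

theorem stmt6_general (n : ℕ) (B : Set (EuclideanSpace ℝ (Fin (n + 1))))
    (hBc : IsCompact B) (hBsc : StrictlyConvexSet B)
    (v : EuclideanSpace ℝ (Fin (n + 1))) (hv : ‖v‖ = 1) :
    (∃ h : Dplus B v ≃ₜ (pv v '' B),
      ∀ x : Dplus B v, (h x : ↥((ℝ ∙ v)ᗮ)) = pv v (x : EuclideanSpace ℝ (Fin (n + 1)))) ∧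
    (∃ h : Dminus B v ≃ₜ (pv v '' B),
      ∀ x : Dminus B v, (h x : ↥((ℝ ∙ v)ᗮ)) = pv v (x : EuclideanSpace ℝ (Fin (n + 1)))) := by
  have hvv : ⟪v, v⟫ ≠ 0 := by simp [hv]
  refine ⟨exists_homeomorph_D0_union_upperRegion hBc hBsc hvv, ?_⟩
  rw [Dminus, Uminus_eq_upperRegion_neg]
  exact exists_homeomorph_D0_union_upperRegion hBc hBsc (by rwa [inner_neg_right, neg_ne_zero])

theorem stmt6 (n : ℕ) (B : Set (EuclideanSpace ℝ (Fin (n + 1))))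
    (hBc : IsCompact B) (hBsc : StrictlyConvexSet B) (hBint : (interior B).Nonempty)
    (v : EuclideanSpace ℝ (Fin (n + 1))) (hv : ‖v‖ = 1) :
    (∃ h : Dplus B v ≃ₜ (pv v '' B),
      ∀ x : Dplus B v, (h x : ↥((ℝ ∙ v)ᗮ)) = pv v (x : EuclideanSpace ℝ (Fin (n + 1)))) ∧
    (∃ h : Dminus B v ≃ₜ (pv v '' B),
      ∀ x : Dminus B v, (h x : ↥((ℝ ∙ v)ᗮ)) = pv v (x : EuclideanSpace ℝ (Fin (n + 1)))) :=
  stmt6_general n B hBc hBsc v hv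
end

section
/- Let B ⊆ ℝ^(n+1) be compact strictly convex with non-empty interior, v₁,…,v_{n+1} an orthonormal basis, and I ⊆ {1,…,n+1} with |I| = k ≤ n. If x ∈ B and p_I(x) ∈ ∂(p_I(B)), then for every i ∈ I, p_i(x) ∈ ∂(p_i(B)). -/
open Metric Set
open scoped RealInnerProductSpace

theorem IsOpenMap.mem_frontier_of_map_mem_frontier {Y Z : Type*} [TopologicalSpace Y]
    [TopologicalSpace Z] {q : Y → Z} (hq : IsOpenMap q) {T : Set Y} {y : Y} (hy : y ∈ T)
    (h : q y ∈ frontier (q '' T)) : y ∈ frontier T :=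
  ⟨subset_closure hy, fun hint => h.2 (hq.image_interior_subset T ⟨y, hint, rfl⟩)⟩

namespace Submodule

variable {𝕜 E : Type*} [RCLike 𝕜] [NormedAddCommGroup E] [InnerProductSpace 𝕜 E]
  {U W : Submodule 𝕜 E} [CompleteSpace U] [CompleteSpace W]

theorem isOpenMap_orthogonalProjectionOnto_comp_subtypeL (h : W ≤ U) :
    IsOpenMap (W.orthogonalProjectionOnto.comp U.subtypeL) :=
  ContinuousLinearMap.isOpenMap _ fun w =>
    ⟨⟨w, h w.2⟩, orthogonalProjectionOnto_mem_subspace_eq_self w⟩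

theorem orthogonalProjectionOnto_mem_frontier_image_of_le (h : W ≤ U) {S : Set E} {x : E}
    (hx : x ∈ S) (hW : W.orthogonalProjectionOnto x ∈ frontier (W.orthogonalProjectionOnto '' S)) :
    U.orthogonalProjectionOnto x ∈ frontier (U.orthogonalProjectionOnto '' S) := by
  have hfactor : ∀ y, (W.orthogonalProjectionOnto.comp U.subtypeL) (U.orthogonalProjectionOnto y) =
      W.orthogonalProjectionOnto y :=
    orthogonalProjectionOnto_starProjection_of_le h
  refine (isOpenMap_orthogonalProjectionOnto_comp_subtypeL h).mem_frontier_of_map_mem_frontier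
    (mem_image_of_mem _ hx) ?_
  rwa [image_image, image_congr fun y _ => hfactor y, hfactor]

end Submodule

theorem stmt17_general (n : ℕ) (B : Set (EuclideanSpace ℝ (Fin (n + 1))))
    (v : Fin (n + 1) → EuclideanSpace ℝ (Fin (n + 1)))
    (I : Finset (Fin (n + 1)))
    (x : EuclideanSpace ℝ (Fin (n + 1))) (hx : x ∈ B)
    (hxI : Submodule.orthogonalProjectionOnto (Submodule.span ℝ (v '' ↑I))ᗮ x ∈
      frontier ((Submodule.orthogonalProjectionOnto (Submodule.span ℝ (v '' ↑I))ᗮ : EuclideanSpace ℝ (Fin (n + 1)) → _) '' B)) :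
    ∀ i ∈ I, pv (v i) x ∈ frontier (pv (v i) '' B) := fun _ hi =>
  Submodule.orthogonalProjectionOnto_mem_frontier_image_of_le
    (Submodule.orthogonal_le (Submodule.span_mono (singleton_subset_iff.2 (mem_image_of_mem v hi))))
    hx hxI

theorem stmt17 (n : ℕ) (B : Set (EuclideanSpace ℝ (Fin (n + 1))))
    (hBc : IsCompact B) (hBsc : StrictlyConvexSet B) (hBint : (interior B).Nonempty)
    (v : Fin (n + 1) → EuclideanSpace ℝ (Fin (n + 1))) (hv : Orthonormal ℝ v)
    (I : Finset (Fin (n + 1))) (hI : I.card ≤ n)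
    (x : EuclideanSpace ℝ (Fin (n + 1))) (hx : x ∈ B)
    (hxI : Submodule.orthogonalProjectionOnto (Submodule.span ℝ (v '' ↑I))ᗮ x ∈
      frontier ((Submodule.orthogonalProjectionOnto (Submodule.span ℝ (v '' ↑I))ᗮ : EuclideanSpace ℝ (Fin (n + 1)) → _) '' B)) :
    ∀ i ∈ I, pv (v i) x ∈ frontier (pv (v i) '' B) :=
  stmt17_general n B v I x hx hxI
end
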